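/- arXiv:2312.09315 — 3 statements merged into one kernel-verified Lean document; each statement's English description precedes it below -/
import Mathlib

section
/- Let p and q be prime numbers, and let H be the cyclic group C_p × C_q if p ≠ q, and H = C_p if p = q. Then there exists a prime r with pq dividing r − 1 and a semidirect product R = F_r ⋊ H (where H acts faithfully on the additive group of the field F_r of r elements by multiplication by units) such that R is generated by an element of order p together with an element of order q. -/
open Multiplicative SemidirectProduct
open scoped commutatorElement

/-!
Take a prime `r ≡ 1 (mod p q)`. The unit group of `ZMod r` is cyclic of order `r - 1`, so the
cyclic group `H` of order `lcm p q` embeds into it via some `χ` and acts faithfully by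
multiplication. For `g, h ∈ H` of orders `p` and `q` put `x = (0, g)` and `y = (1, h)`. Since
`χ h ≠ 1`, `y` is conjugate to `(0, h)` and so has order `q`. The commutator of `x` and `y` is the
translation by `χ g - 1 ≠ 0`, which generates the base `ZMod r` because it has prime order; as
`x` and `y` also map onto `H`, they generate the whole semidirect product.
-/

theorem IsCyclic.exists_orderOf_eq_of_dvd {α : Type*} [Group α] [Finite α] [IsCyclic α] {d : ℕ}
    (hd : d ∣ Nat.card α) : ∃ g : α, orderOf g = d := by
  obtain ⟨g, hg⟩ := IsCyclic.exists_ofOrder_eq_natCard (α := α)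
  rw [← hg] at hd
  exact ⟨g ^ (orderOf g / d), orderOf_pow_orderOf_div (hg ▸ Nat.card_pos.ne') hd⟩

theorem IsCyclic.exists_injective_monoidHom {H G : Type*} [Group H] [Finite H] [IsCyclic H]
    [Group G] [Finite G] [IsCyclic G] (hHG : Nat.card H ∣ Nat.card G) :
    ∃ f : H →* G, Function.Injective f := by
  obtain ⟨u, hu⟩ := IsCyclic.exists_orderOf_eq_of_dvd hHG
  let e : H ≃* Subgroup.zpowers u := mulEquivOfCyclicCardEq (by rw [Nat.card_zpowers, hu])
  exact ⟨(Subgroup.zpowers u).subtype.comp e.toMonoidHom, Subtype.val_injective.comp e.injective⟩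

theorem Subgroup.closure_pair_eq_top_of_card_dvd_lcm {G : Type*} [Group G] [Finite G] {g h : G}
    (hgh : Nat.card G ∣ Nat.lcm (orderOf g) (orderOf h)) : closure {g, h} = ⊤ := by
  refine eq_top_of_le_card _ (Nat.le_of_dvd Nat.card_pos (hgh.trans (Nat.lcm_dvd ?_ ?_)))
  · exact orderOf_dvd_natCard _ (subset_closure (Set.mem_insert g _))
  · exact orderOf_dvd_natCard _ (subset_closure (Set.mem_insert_of_mem g rfl))

theorem Nat.Prime.lcm_eq {p q : ℕ} (hp : p.Prime) (hq : q.Prime) :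
    Nat.lcm p q = if p = q then p else p * q := by
  split_ifs with hpq
  · rw [hpq, Nat.lcm_self]
  · exact ((Nat.coprime_primes hp hq).mpr hpq).lcm_eq_mul

def mulLeftMulAut (R : Type*) [Ring R] : Rˣ →* MulAut (Multiplicative R) :=
  (MulAutMultiplicative R).symm.toMonoidHom.comp AddAut.mulLeft

@[simp]
theorem toAdd_mulLeftMulAut_apply {R : Type*} [Ring R] (u : Rˣ) (z : Multiplicative R) :
    toAdd (mulLeftMulAut R u z) = u * toAdd z :=
  rfl

theorem mulLeftMulAut_injective (R : Type*) [Ring R] : Function.Injective (mulLeftMulAut R) :=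
  fun u v huv ↦ Units.ext (by simpa using congrArg (fun f ↦ toAdd (f (ofAdd 1))) huv)

section

variable {F : Type*} [Field F]

theorem orderOf_mk_ofAdd {G : Type*} [Group G] (χ : G →* Fˣ) {h : G} (hh : χ h ≠ 1) (a : F) :
    orderOf (⟨ofAdd a, h⟩ : Multiplicative F ⋊[(mulLeftMulAut F).comp χ] G) = orderOf h := by
  have hv : (1 - χ h : F) ≠ 0 := sub_ne_zero.mpr (Ne.symm (Units.val_eq_one.not.mpr hh))
  -- `c = a / (1 - χ h)` solves `c = a + χ h * c`, i.e. `(c, 1) * (0, h) = (a, h) * (c, 1)`.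
  have hconj : SemiconjBy (inl (ofAdd (a / (1 - χ h))))
      (inr h : Multiplicative F ⋊[(mulLeftMulAut F).comp χ] G) ⟨ofAdd a, h⟩ := by
    refine SemidirectProduct.ext (toAdd.injective ?_) (by simp)
    simp only [mul_left, left_inl, right_inl, MonoidHom.coe_comp, Function.comp_apply, map_one,
      left_inr, mul_one, toAdd_ofAdd, mk_eq_inl_mul_inr, mul_right, right_inr,
      one_mul, toAdd_mul, toAdd_mulLeftMulAut_apply]
    field_simp
    ring
  rw [← hconj.orderOf_eq, orderOf_injective _ inr_injective]

theorem commutatorElement_inr_mk {G : Type*} [CommGroup G] (χ : G →* Fˣ) (g h : G) (a : F) :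
    ⁅(inr g : Multiplicative F ⋊[(mulLeftMulAut F).comp χ] G),
      (⟨ofAdd a, h⟩ : Multiplicative F ⋊[(mulLeftMulAut F).comp χ] G)⁆ =
      inl (ofAdd ((χ g - 1) * a)) := by
  refine SemidirectProduct.ext (toAdd.injective ?_) ?_
  · simp only [mk_eq_inl_mul_inr, commutatorElement_def, mul_inv_rev, mul_left, left_inr,
      right_inr, MonoidHom.coe_comp, Function.comp_apply, left_inl, right_inl, map_one,
      MulAut.one_apply, mul_one, one_mul, mul_right, map_mul, inv_left, map_inv, inv_one,
      MulAut.inv_apply, inv_right, mul_inv_cancel_comm,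
      MulEquiv.apply_symm_apply, toAdd_mul, toAdd_mulLeftMulAut_apply, toAdd_ofAdd, toAdd_inv]
    ring
  · simp [commutatorElement_def]

end

theorem closure_inr_mk_eq_top {r : ℕ} [Fact r.Prime] {G : Type*} [CommGroup G]
    (χ : G →* (ZMod r)ˣ) {g h : G} (hg : χ g ≠ 1) {a : ZMod r} (ha : a ≠ 0)
    (hgh : Subgroup.closure {g, h} = ⊤) :
    Subgroup.closure {(inr g : Multiplicative (ZMod r) ⋊[(mulLeftMulAut _).comp χ] G),
      ⟨ofAdd a, h⟩} = ⊤ := by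
  set K := Subgroup.closure {(inr g : Multiplicative (ZMod r) ⋊[(mulLeftMulAut _).comp χ] G),
      ⟨ofAdd a, h⟩}
  have hx : inr g ∈ K := Subgroup.subset_closure (Set.mem_insert _ _)
  have hy : ⟨ofAdd a, h⟩ ∈ K := Subgroup.subset_closure (Set.mem_insert_of_mem _ rfl)
  have hcomm : inl (ofAdd ((χ g - 1) * a)) ∈ K := by
    rw [← commutatorElement_inr_mk, commutatorElement_def]
    exact mul_mem (mul_mem (mul_mem hx hy) (inv_mem hx)) (inv_mem hy)
  have hbase : (inl : _ →* Multiplicative (ZMod r) ⋊[(mulLeftMulAut _).comp χ] G).range ≤ K := by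
    rw [MonoidHom.range_eq_map, Subgroup.map_le_iff_le_comap, top_le_iff]
    have : Fact (Nat.card (Multiplicative (ZMod r))).Prime := ⟨by simpa using Fact.out⟩
    refine (K.comap inl).eq_bot_or_eq_top_of_prime_card.resolve_left fun hbot ↦ ?_
    have hmem : ofAdd ((χ g - 1) * a) ∈ K.comap inl := hcomm
    rw [hbot, Subgroup.mem_bot, ← ofAdd_zero, ofAdd.injective.eq_iff, mul_eq_zero, sub_eq_zero,
      Units.val_eq_one] at hmem
    exact hmem.elim hg ha
  have hmap : K.map rightHom = ⊤ := by
    rw [MonoidHom.map_closure, Set.image_pair, rightHom_inr]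
    exact hgh
  calc K = (K.map rightHom).comap rightHom :=
        (Subgroup.comap_map_eq_self (by rwa [← range_inl_eq_ker_rightHom])).symm
    _ = ⊤ := by rw [hmap, Subgroup.comap_top]

/-- For primes `p`, `q`, with `H = C_p × C_q` (encoded as the cyclic group
`ZMod (p*q)` when `p ≠ q`, and `ZMod p` when `p = q`), there is a prime `r` with
`p*q ∣ r - 1` and a semidirect product `R = F_r ⋊ H`, with `H` acting faithfully on the
additive group of `F_r` by multiplication by units, such that `R` is generated by an
element of order `p` together with an element of order `q`. -/
theorem stmt_0 (p q : ℕ) (hp : p.Prime) (hq : q.Prime) :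
    ∃ r : ℕ, r.Prime ∧ p * q ∣ r - 1 ∧
      ∃ φ : Multiplicative (ZMod (if p = q then p else p * q)) →*
          MulAut (Multiplicative (ZMod r)),
        Function.Injective φ ∧
        (∀ h, ∃ u : (ZMod r)ˣ, ∀ z : Multiplicative (ZMod r),
          Multiplicative.toAdd ((φ h) z) = (u : ZMod r) * Multiplicative.toAdd z) ∧
        ∃ x y : Multiplicative (ZMod r) ⋊[φ]
            Multiplicative (ZMod (if p = q then p else p * q)),
          orderOf x = p ∧ orderOf y = q ∧ Subgroup.closure {x, y} = ⊤ := by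
  obtain ⟨r, hr, -, hr1⟩ :=
    Nat.exists_prime_gt_modEq_one (p * q) (mul_ne_zero hp.ne_zero hq.ne_zero)
  have : Fact r.Prime := ⟨hr⟩
  have hdvd : p * q ∣ r - 1 := (Nat.modEq_iff_dvd' hr.one_lt.le).mp hr1.symm
  refine ⟨r, hr, hdvd, ?_⟩
  rw [← hp.lcm_eq hq]
  have : NeZero (p.lcm q) := ⟨Nat.lcm_ne_zero hp.ne_zero hq.ne_zero⟩
  have hcard : Nat.card (Multiplicative (ZMod (p.lcm q))) = p.lcm q := by simp
  obtain ⟨χ, hχ⟩ := IsCyclic.exists_injective_monoidHom (G := (ZMod r)ˣ) (by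
    rw [hcard, Nat.card_eq_fintype_card, ZMod.card_units]
    exact (Nat.lcm_dvd_mul p q).trans hdvd)
  obtain ⟨g, hg⟩ := IsCyclic.exists_orderOf_eq_of_dvd (hcard ▸ Nat.dvd_lcm_left p q)
  obtain ⟨h, hh⟩ := IsCyclic.exists_orderOf_eq_of_dvd (hcard ▸ Nat.dvd_lcm_right p q)
  have hχ_ne_one {x} (hx : orderOf x ≠ 1) : χ x ≠ 1 :=
    fun h1 ↦ hx (orderOf_eq_one_iff.mpr (hχ (h1.trans χ.map_one.symm)))
  refine ⟨(mulLeftMulAut _).comp χ, (mulLeftMulAut_injective _).comp hχ,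
    fun x ↦ ⟨χ x, fun _ ↦ rfl⟩, inr g, ⟨ofAdd 1, h⟩, ?_, ?_, ?_⟩
  · rw [orderOf_injective _ inr_injective, hg]
  · rw [orderOf_mk_ofAdd χ (hχ_ne_one (hh.symm ▸ hq.ne_one)), hh]
  · exact closure_inr_mk_eq_top χ (hχ_ne_one (hg.symm ▸ hp.ne_one)) one_ne_zero
      (Subgroup.closure_pair_eq_top_of_card_dvd_lcm (by rw [hcard, hg, hh]))
end

section
/- Let G = G_1 * G_2 be the free product of two nontrivial finite groups with |G_1| + |G_2| > 4, choose nonidentity elements g_1 ∈ G_1 and g_2 ∈ G_2 and set g = g_1 g_2. Then the subgroup H of G generated by G_1 and g⁻¹G_2g is the free product G_1 * (G_2)^g and is a proper subgroup of G of infinite index. -/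
/-!
Write elements of `G₁ ∗ G₂` as reduced alternating words. Since
`g⁻¹ y g = g₂⁻¹ g₁⁻¹ y g₁ g₂`, substituting `g⁻¹ y g` for each letter `y ∈ G₂` of a reduced word
yields a word that is again reduced. So the substitution map `f` sends a nontrivial element to a
nontrivial one whose reduced word begins in the same factor, and begins with `g₂⁻¹ g₁⁻¹` if that
factor is `G₂`. Hence `H`, the image of `f`, contains neither `g₂` nor any positive power of
`z u` for nontrivial `z ∈ G₂`, `u ∈ G₁` with `(z, u) ≠ (g₂⁻¹, g₁⁻¹)`; such a pair exists because
`|G₁| + |G₂| > 4`. A subgroup of finite index contains a positive power of every element.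
-/

open Monoid

theorem exists_ne_ne_of_two_lt_card {α : Type*} (h : 2 < Nat.card α) (a b : α) :
    ∃ c, c ≠ a ∧ c ≠ b :=
  have : Finite α := Nat.finite_of_card_ne_zero (by omega)
  Cardinal.exists_ne_ne_of_three_le (by rw [← Nat.cast_card]; exact_mod_cast h) a b

namespace Monoid.Coprod

open CoprodI

universe u v

section NormalForm

variable (G₁ : Type u) (G₂ : Type v) [Group G₁] [Group G₂]

-- `true ↦ G₁`, `false ↦ G₂`, lifted to a common universe so that `CoprodI` and its reduced
-- words `CoprodI.Word` apply.
abbrev Factors : Bool → Type (max u v) := fun b => cond b (ULift.{v} G₁) (ULift.{u} G₂)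

instance : ∀ b, Group (Factors G₁ G₂ b)
  | true => inferInstanceAs (Group (ULift G₁))
  | false => inferInstanceAs (Group (ULift G₂))

noncomputable instance : ∀ b, DecidableEq (Factors G₁ G₂ b) := fun _ => Classical.decEq _

def toCoprodI : Coprod G₁ G₂ ≃* CoprodI (Factors G₁ G₂) :=
  MonoidHom.toMulEquiv
    (lift ((of (i := true)).comp MulEquiv.ulift.symm.toMonoidHom)
      ((of (i := false)).comp MulEquiv.ulift.symm.toMonoidHom))
    (CoprodI.lift fun
      | true => inl.comp MulEquiv.ulift.toMonoidHom
      | false => inr.comp MulEquiv.ulift.toMonoidHom)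
    (by ext <;> simp)
    (by ext (_ | _) <;> simp)

variable {G₁ G₂}

noncomputable def normalForm (x : Coprod G₁ G₂) : Word (Factors G₁ G₂) :=
  Word.equiv (toCoprodI G₁ G₂ x)

@[simp] theorem toCoprodI_inl (a : G₁) : toCoprodI G₁ G₂ (inl a) = of (i := true) (.up a) := rfl
@[simp] theorem toCoprodI_inr (y : G₂) : toCoprodI G₁ G₂ (inr y) = of (i := false) (.up y) := rfl

theorem normalForm_eq_empty_iff {x : Coprod G₁ G₂} : normalForm x = .empty ↔ x = 1 := by
  rw [normalForm, ← (toCoprodI G₁ G₂).map_eq_one_iff, ← Word.equiv.apply_eq_iff_eq]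
  rfl

@[simp] theorem normalForm_one : normalForm (1 : Coprod G₁ G₂) = .empty :=
  normalForm_eq_empty_iff.2 rfl

theorem normalForm_mul (x y : Coprod G₁ G₂) :
    normalForm (x * y) = toCoprodI G₁ G₂ x • normalForm y := by
  simp [normalForm, Word.equiv, mul_smul]

theorem normalForm_inl_mul {a : G₁} (ha : a ≠ 1) {x : Coprod G₁ G₂}
    (hx : (normalForm x).fstIdx ≠ some true) :
    normalForm (inl a * x) =
      Word.cons (i := true) (.up a) (normalForm x) hx (by simpa [ULift.ext_iff] using ha) := by
  rw [normalForm_mul, Word.cons_eq_smul, toCoprodI_inl]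

theorem normalForm_inr_mul {y : G₂} (hy : y ≠ 1) {x : Coprod G₁ G₂}
    (hx : (normalForm x).fstIdx ≠ some false) :
    normalForm (inr y * x) =
      Word.cons (i := false) (.up y) (normalForm x) hx (by simpa [ULift.ext_iff] using hy) := by
  rw [normalForm_mul, Word.cons_eq_smul, toCoprodI_inr]

theorem normalForm_symm_prod (w : Word (Factors G₁ G₂)) :
    normalForm ((toCoprodI G₁ G₂).symm w.prod) = w := by
  rw [normalForm, MulEquiv.apply_symm_apply]
  exact Word.equiv.apply_symm_apply w

@[elab_as_elim]
theorem induction_normalForm {motive : Coprod G₁ G₂ → Prop} (one : motive 1)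
    (inl_mul : ∀ a : G₁, a ≠ 1 → ∀ x, (normalForm x).fstIdx ≠ some true →
      motive x → motive (inl a * x))
    (inr_mul : ∀ y : G₂, y ≠ 1 → ∀ x, (normalForm x).fstIdx ≠ some false →
      motive x → motive (inr y * x))
    (x : Coprod G₁ G₂) : motive x := by
  suffices ∀ w : Word (Factors G₁ G₂), motive ((toCoprodI G₁ G₂).symm w.prod) by
    have hx : (toCoprodI G₁ G₂).symm (normalForm x).prod = x :=
      (congrArg _ (Word.equiv.symm_apply_apply _)).trans ((toCoprodI G₁ G₂).symm_apply_apply x)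
    simpa [hx] using this (normalForm x)
  intro w
  induction w using Word.consRecOn with
  | empty => simpa using one
  | cons i m w hw hm ih =>
    rw [Word.prod_cons, map_mul]
    rw [← normalForm_symm_prod w] at hw
    cases i
    · exact inr_mul m.down (by simpa [ULift.ext_iff] using hm) _ hw ih
    · exact inl_mul m.down (by simpa [ULift.ext_iff] using hm) _ hw ih

theorem fstIdx_normalForm_eq_none_iff {x : Coprod G₁ G₂} :
    (normalForm x).fstIdx = none ↔ x = 1 := by
  rw [← normalForm_eq_empty_iff]
  exact ⟨fun h => Word.ext (by simpa [Word.fstIdx] using h), fun h => h ▸ rfl⟩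

end NormalForm

section Conj

variable {G₁ : Type u} {G₂ : Type v} [Group G₁] [Group G₂] (g₁ : G₁) (g₂ : G₂)

def conjInr : G₂ →* Coprod G₁ G₂ :=
  ((MulAut.conj (inl g₁ * inr g₂))⁻¹).toMonoidHom.comp inr

def liftConjInr : Coprod G₁ G₂ →* Coprod G₁ G₂ := lift inl (conjInr g₁ g₂)

def BeginsWithConj (w : Word (Factors G₁ G₂)) : Prop :=
  ∃ l, w.toList = ⟨false, .up g₂⁻¹⟩ :: ⟨true, .up g₁⁻¹⟩ :: l

@[simp] theorem liftConjInr_inl (a : G₁) : liftConjInr g₁ g₂ (inl a) = inl a := lift_apply_inl ..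

@[simp] theorem liftConjInr_inr (y : G₂) : liftConjInr g₁ g₂ (inr y) = conjInr g₁ g₂ y :=
  lift_apply_inr ..

theorem conjInr_apply (y : G₂) :
    conjInr g₁ g₂ y = inr g₂⁻¹ * (inl g₁⁻¹ * (inr y * (inl g₁ * inr g₂))) := by
  simp [conjInr, mul_assoc]

variable {g₁ g₂}

theorem BeginsWithConj.fstIdx {w : Word (Factors G₁ G₂)} (h : BeginsWithConj g₁ g₂ w) :
    w.fstIdx = some false := by
  obtain ⟨l, hl⟩ := h
  simp [Word.fstIdx, hl]

theorem beginsWithConj_normalForm_conjInr_mul (hg₁ : g₁ ≠ 1) (hg₂ : g₂ ≠ 1) {y : G₂}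
    (hy : y ≠ 1) {x : Coprod G₁ G₂} (hx : (normalForm x).fstIdx ≠ some false) :
    BeginsWithConj g₁ g₂ (normalForm (conjInr g₁ g₂ y * x)) := by
  have h₅ := normalForm_inr_mul hg₂ hx
  have h₄ := normalForm_inl_mul hg₁ (x := inr g₂ * x) (by rw [h₅]; simp)
  have h₃ := normalForm_inr_mul hy (x := inl g₁ * (inr g₂ * x)) (by rw [h₄]; simp)
  have h₂ := normalForm_inl_mul (inv_ne_one.2 hg₁) (x := inr y * (inl g₁ * (inr g₂ * x)))
    (by rw [h₃]; simp)
  rw [conjInr_apply]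
  simp only [mul_assoc]
  rw [normalForm_inr_mul (inv_ne_one.2 hg₂) (by rw [h₂]; simp)]
  exact ⟨_, by rw [Word.cons_toList, h₂, Word.cons_toList]⟩

theorem normalForm_liftConjInr (hg₁ : g₁ ≠ 1) (hg₂ : g₂ ≠ 1) (x : Coprod G₁ G₂) :
    (normalForm (liftConjInr g₁ g₂ x)).fstIdx = (normalForm x).fstIdx ∧
      ((normalForm x).fstIdx = some false →
        BeginsWithConj g₁ g₂ (normalForm (liftConjInr g₁ g₂ x))) := by
  induction x using induction_normalForm with
  | one => simp [Word.fstIdx, Word.empty]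
  | inl_mul a ha x hx ih =>
    rw [map_mul, liftConjInr_inl, normalForm_inl_mul ha hx,
      normalForm_inl_mul ha (ih.1 ▸ hx), Word.fstIdx_cons, Word.fstIdx_cons]
    simp
  | inr_mul y hy x hx ih =>
    have h := beginsWithConj_normalForm_conjInr_mul hg₁ hg₂ hy (ih.1 ▸ hx)
    rw [map_mul, liftConjInr_inr, normalForm_inr_mul hy hx, Word.fstIdx_cons]
    exact ⟨h.fstIdx, fun _ => h⟩

theorem liftConjInr_injective (hg₁ : g₁ ≠ 1) (hg₂ : g₂ ≠ 1) :
    Function.Injective (liftConjInr g₁ g₂) := by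
  refine (injective_iff_map_eq_one _).2 fun x hx => ?_
  have h := (normalForm_liftConjInr hg₁ hg₂ x).1
  rwa [hx, fstIdx_normalForm_eq_none_iff.2 rfl, eq_comm, fstIdx_normalForm_eq_none_iff] at h

theorem notMem_range_liftConjInr (hg₁ : g₁ ≠ 1) (hg₂ : g₂ ≠ 1) {x : Coprod G₁ G₂}
    (hx : (normalForm x).fstIdx = some false) (hx' : ¬BeginsWithConj g₁ g₂ (normalForm x)) :
    x ∉ (liftConjInr g₁ g₂).range := by
  rintro ⟨w, rfl⟩
  obtain ⟨hidx, hbegins⟩ := normalForm_liftConjInr hg₁ hg₂ w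
  exact hx' (hbegins (hidx ▸ hx))

theorem inr_notMem_range_liftConjInr (hg₁ : g₁ ≠ 1) (hg₂ : g₂ ≠ 1) :
    inr g₂ ∉ (liftConjInr g₁ g₂).range := by
  have h := normalForm_inr_mul (G₁ := G₁) hg₂ (x := 1) (by simp [Word.fstIdx, Word.empty])
  rw [mul_one] at h
  refine notMem_range_liftConjInr hg₁ hg₂ (by simp [h]) ?_
  rintro ⟨l, hl⟩
  simp [h] at hl

theorem normalForm_pow_succ_inr_mul_inl {z : G₂} {u : G₁} (hz : z ≠ 1) (hu : u ≠ 1) (k : ℕ) :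
    (normalForm ((inr z * inl u) ^ (k + 1))).toList =
      ⟨false, .up z⟩ :: ⟨true, .up u⟩ :: (normalForm ((inr z * inl u) ^ k)).toList := by
  have hfst : (normalForm ((inr z * inl u) ^ k)).fstIdx ≠ some true := by
    cases k with
    | zero => simp [Word.fstIdx, Word.empty]
    | succ k => simp [Word.fstIdx, normalForm_pow_succ_inr_mul_inl hz hu k]
  rw [pow_succ', mul_assoc, normalForm_inr_mul hz (by rw [normalForm_inl_mul hu hfst]; simp),
    Word.cons_toList, normalForm_inl_mul hu hfst, Word.cons_toList]

theorem pow_notMem_range_liftConjInr (hg₁ : g₁ ≠ 1) (hg₂ : g₂ ≠ 1) {z : G₂} {u : G₁}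
    (hz : z ≠ 1) (hu : u ≠ 1) (hzu : z ≠ g₂⁻¹ ∨ u ≠ g₁⁻¹) (k : ℕ) :
    (inr z * inl u) ^ (k + 1) ∉ (liftConjInr g₁ g₂).range := by
  have h := normalForm_pow_succ_inr_mul_inl hz hu k
  refine notMem_range_liftConjInr hg₁ hg₂ (by simp [Word.fstIdx, h]) ?_
  rintro ⟨l, hl⟩
  simp only [h, List.cons.injEq, Sigma.mk.injEq, heq_eq_eq, true_and] at hl
  exact hzu.elim (· (congrArg ULift.down hl.1)) (· (congrArg ULift.down hl.2.1))

theorem index_range_liftConjInr (hcard : 4 < Nat.card G₁ + Nat.card G₂) (hg₁ : g₁ ≠ 1)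
    (hg₂ : g₂ ≠ 1) : (liftConjInr g₁ g₂).range.index = 0 := by
  obtain ⟨z, hz, u, hu, hzu⟩ : ∃ z : G₂, z ≠ 1 ∧ ∃ u : G₁, u ≠ 1 ∧ (z ≠ g₂⁻¹ ∨ u ≠ g₁⁻¹) := by
    by_cases h₂ : 2 < Nat.card G₂
    · obtain ⟨z, hz, hz'⟩ := exists_ne_ne_of_two_lt_card h₂ 1 g₂⁻¹
      exact ⟨z, hz, g₁, hg₁, .inl hz'⟩
    · obtain ⟨u, hu, hu'⟩ := exists_ne_ne_of_two_lt_card (α := G₁) (by omega) 1 g₁⁻¹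
      exact ⟨g₂, hg₂, u, hu, .inr hu'⟩
  by_contra hindex
  obtain ⟨n, hn, -, hmem⟩ := Subgroup.exists_pow_mem_of_index_ne_zero hindex (inr z * inl u)
  obtain ⟨k, rfl⟩ := Nat.exists_eq_add_one.2 hn
  exact pow_notMem_range_liftConjInr hg₁ hg₂ hz hu hzu k hmem

end Conj

end Monoid.Coprod

theorem stmt_5_general (G₁ G₂ : Type*) [Group G₁] [Group G₂]
    (hcard : 4 < Nat.card G₁ + Nat.card G₂)
    (g₁ : G₁) (hg₁ : g₁ ≠ 1) (g₂ : G₂) (hg₂ : g₂ ≠ 1) :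
    let g : Coprod G₁ G₂ := Coprod.inl g₁ * Coprod.inr g₂
    let φ : G₂ →* Coprod G₁ G₂ := ((MulAut.conj g)⁻¹).toMonoidHom.comp Coprod.inr
    let f : Coprod G₁ G₂ →* Coprod G₁ G₂ := Coprod.lift Coprod.inl φ
    let H : Subgroup (Coprod G₁ G₂) :=
      (Coprod.inl : G₁ →* Coprod G₁ G₂).range ⊔ φ.range
    Function.Injective f ∧ f.range = H ∧ H ≠ ⊤ ∧ H.index = 0 := by
  intro g φ f H
  have hH : f.range = H := Coprod.range_lift _ _
  refine ⟨Coprod.liftConjInr_injective hg₁ hg₂, hH, ?_,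
    hH ▸ Coprod.index_range_liftConjInr hcard hg₁ hg₂⟩
  rw [← hH]
  exact fun htop =>
    Coprod.inr_notMem_range_liftConjInr hg₁ hg₂ (htop ▸ Subgroup.mem_top (Coprod.inr g₂))

/-- Let `G = G₁ * G₂` be the free product of two nontrivial finite groups
with `|G₁| + |G₂| > 4`; pick `g₁ ≠ 1` in `G₁`, `g₂ ≠ 1` in `G₂` and set `g = g₁ g₂`.
Then the subgroup `H` generated by `G₁` and `g⁻¹ G₂ g` is the free product
`G₁ * (G₂)^g` (i.e. the canonical map from the free product to `G` is injective with
image `H`) and `H` is a proper subgroup of `G` of infinite index. -/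
theorem stmt_5 (G₁ G₂ : Type*) [Group G₁] [Group G₂] [Finite G₁] [Finite G₂]
    [Nontrivial G₁] [Nontrivial G₂] (hcard : 4 < Nat.card G₁ + Nat.card G₂)
    (g₁ : G₁) (hg₁ : g₁ ≠ 1) (g₂ : G₂) (hg₂ : g₂ ≠ 1) :
    let g : Coprod G₁ G₂ := Coprod.inl g₁ * Coprod.inr g₂
    let φ : G₂ →* Coprod G₁ G₂ := ((MulAut.conj g)⁻¹).toMonoidHom.comp Coprod.inr
    let f : Coprod G₁ G₂ →* Coprod G₁ G₂ := Coprod.lift Coprod.inl φ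
    let H : Subgroup (Coprod G₁ G₂) :=
      (Coprod.inl : G₁ →* Coprod G₁ G₂).range ⊔ φ.range
    Function.Injective f ∧ f.range = H ∧ H ≠ ⊤ ∧ H.index = 0 :=
  stmt_5_general G₁ G₂ hcard g₁ hg₁ g₂ hg₂
end

section
/- A torsion-free pro-p group that contains an open (finite-index) procyclic subgroup is itself procyclic (isomorphic to Z_p or trivial). -/
/-!
In a pro-`p` group the powers `h ^ n` extend continuously to exponents `z ∈ ℤ_[p]`, giving
a continuous homomorphism `ℤ_[p] → G` onto the closure of `⟨h⟩`, injective when `h` has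
infinite order. For `h` generating the open subgroup `H` this identifies `H` with `ℤ_[p]`.
Conjugation by `g` commutes with `p`-adic powers and fixes the power `g ^ m ∈ H`; as `ℤ_[p]`
is a domain, `g` then centralises the normal core `N` of `H`. Hence the centre has finite
index, and the transfer `G → Z(G)`, injective by torsion-freeness, shows that `G` is abelian.
Now `g ↦ g ^ [G : N]` followed by `H ≅ ℤ_[p]` embeds `G` as a nonzero closed subgroup of
`ℤ_[p]`, i.e. as `p ^ k ℤ_[p]`.
-/

open Filter Topology Function

/-- A topological group is procyclic if it is topologically generated by one element. -/
def IsProcyclic (G : Type*) [Group G] [TopologicalSpace G] : Prop :=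
  ∃ g : G, Dense ((Subgroup.zpowers g : Subgroup G) : Set G)

/-- A (profinite) topological group is pro-`p` if every open subgroup has `p`-power
index. -/
def IsProP (p : ℕ) (G : Type*) [Group G] [TopologicalSpace G] : Prop :=
  ∀ U : Subgroup G, IsOpen (U : Set G) → ∃ k : ℕ, U.index = p ^ k

section Procyclic

variable {G : Type*} [Group G] [TopologicalSpace G]

theorem IsProcyclic.of_surjective {K : Type*} [Group K] [TopologicalSpace K]
    (hG : IsProcyclic G) (f : G →* K) (hf : Continuous f) (hs : Surjective f) :
    IsProcyclic K := by
  obtain ⟨g, hg⟩ := hG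
  refine ⟨f g, ?_⟩
  rw [← MonoidHom.map_zpowers, Subgroup.coe_map]
  exact hs.denseRange.dense_image hf hg

theorem isProcyclic_of_subsingleton [Subsingleton G] : IsProcyclic G :=
  ⟨1, fun x => Subsingleton.elim 1 x ▸ subset_closure (Subgroup.one_mem _)⟩

theorem isProcyclic_multiplicative_padicInt {p : ℕ} [Fact p.Prime] :
    IsProcyclic (Multiplicative ℤ_[p]) := by
  refine ⟨Multiplicative.ofAdd 1, PadicInt.denseRange_intCast.mono ?_⟩
  rintro _ ⟨n, rfl⟩
  refine ⟨n, ?_⟩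
  change Multiplicative.ofAdd 1 ^ n = Multiplicative.ofAdd (n : ℤ_[p])
  rw [← ofAdd_zsmul, zsmul_one]

theorem exists_closure_zpowers_eq_of_isProcyclic {H : Subgroup G} (hH : IsClosed (H : Set G))
    (hHc : IsProcyclic H) : ∃ h : G, closure (Subgroup.zpowers h : Set G) = H := by
  obtain ⟨g, hg⟩ := hHc
  have hemb : IsClosedEmbedding H.subtype := hH.isClosedEmbedding_subtypeVal
  refine ⟨g, ?_⟩
  rw [← H.coe_subtype, ← MonoidHom.map_zpowers, Subgroup.coe_map, hemb.closure_image_eq,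
    hg.closure_eq, Set.image_univ, Subgroup.coe_subtype, Subtype.range_coe]

end Procyclic

theorem Subgroup.finiteIndex_of_isOpen {G : Type*} [Group G] [TopologicalSpace G]
    [IsTopologicalGroup G] [CompactSpace G] {K : Subgroup G} (hK : IsOpen (K : Set G)) :
    K.FiniteIndex :=
  have := Subgroup.quotient_finite_of_isOpen K hK
  K.finiteIndex_of_finite_quotient

theorem subsingleton_of_isOpen_singleton_one {G : Type*} [Group G] [TopologicalSpace G]
    [IsTopologicalGroup G] [CompactSpace G] (htf : ∀ g : G, g ≠ 1 → ¬IsOfFinOrder g)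
    (h1 : IsOpen ({1} : Set G)) : Subsingleton G := by
  have := discreteTopology_of_isOpen_singleton_one h1
  have := finite_of_compact_of_discrete (X := G)
  exact subsingleton_of_forall_eq 1 fun g =>
    by_contra fun hg => htf g hg (isOfFinOrder_of_finite g)

theorem commute_of_torsionFree_of_finiteIndex_center {G : Type*} [Group G]
    [(Subgroup.center G).FiniteIndex] (htf : ∀ g : G, g ≠ 1 → ¬IsOfFinOrder g) (g k : G) :
    Commute g k := by
  -- the transfer `g ↦ g ^ [G : Z(G)]` is an injective homomorphism into the abelian group `Z(G)`
  have hinj : Injective (MonoidHom.transferCenterPow G) := by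
    refine (injective_iff_map_eq_one _).mpr fun x hx => by_contra fun hx1 => htf x hx1 ?_
    refine isOfFinOrder_iff_pow_eq_one.mpr
      ⟨(Subgroup.center G).index, Nat.pos_of_ne_zero Subgroup.FiniteIndex.index_ne_zero, ?_⟩
    rw [← MonoidHom.transferCenterPow_apply, hx, OneMemClass.coe_one]
  refine hinj (Subtype.ext ?_)
  simpa using (Subgroup.mem_center_iff.mp (MonoidHom.transferCenterPow G k).2 _)

section Profinite

variable {G : Type*} [Group G] [TopologicalSpace G] [IsTopologicalGroup G] [CompactSpace G]
  [TotallyDisconnectedSpace G]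

theorem ProfiniteGrp.nhds_one_hasBasis_openNormalSubgroup :
    (𝓝 (1 : G)).HasBasis (fun _ : OpenNormalSubgroup G => True)
      ((↑) : OpenNormalSubgroup G → Set G) := by
  refine ⟨fun W => ⟨fun hW => ?_, fun ⟨U, _, hUW⟩ =>
    mem_of_superset (U.isOpen.mem_nhds U.one_mem) hUW⟩⟩
  obtain ⟨V, hVW, hV, h1V⟩ := mem_nhds_iff.mp hW
  obtain ⟨U, hU⟩ := ProfiniteGrp.exist_openNormalSubgroup_sub_open_nhds_of_one hV h1V
  exact ⟨U, trivial, hU.trans hVW⟩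

open Pointwise in
theorem exists_tendsto_of_forall_openNormalSubgroup {s : ℕ → G}
    (hs : ∀ U : OpenNormalSubgroup G, ∃ j, ∀ n ≥ j, (s j)⁻¹ * s n ∈ U) :
    ∃ x, Tendsto s atTop (𝓝 x) := by
  obtain ⟨x, hx⟩ := exists_clusterPt_of_compactSpace (map s atTop)
  refine ⟨x, ?_⟩
  suffices Tendsto (fun n => x⁻¹ * s n) atTop (𝓝 1) by
    simpa using this.const_mul x
  refine ProfiniteGrp.nhds_one_hasBasis_openNormalSubgroup.tendsto_right_iff.mpr fun U _ => ?_
  obtain ⟨j, hj⟩ := hs U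
  have hx_mem : x ∈ s j • (U : Set G) := by
    refine ((U.toOpenSubgroup.isClosed).smul (s j)).closure_subset_iff.mpr ?_
      (mem_closure_iff_clusterPt.mpr
        (hx.mono (le_principal_iff.mpr (image_mem_map (Ici_mem_atTop j)))))
    rintro _ ⟨n, hn, rfl⟩
    exact ⟨_, hj n hn, mul_inv_cancel_left _ _⟩
  obtain ⟨u, hu, rfl⟩ := hx_mem
  filter_upwards [Ici_mem_atTop j] with n hn
  rw [smul_eq_mul, mul_inv_rev, mul_assoc]
  exact U.mul_mem (U.inv_mem hu) (hj n hn)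

end Profinite

section PadicInt

variable {p : ℕ} [hp : Fact p.Prime]

theorem PadicInt.pow_dvd_sub_appr (n : ℕ) (z : ℤ_[p]) : (p : ℤ_[p]) ^ n ∣ z - z.appr n :=
  Ideal.mem_span_singleton.mp (PadicInt.appr_spec n z)

theorem PadicInt.exists_mem_iff_pow_dvd_of_isClosed {S : AddSubgroup ℤ_[p]}
    (hS : IsClosed (S : Set ℤ_[p])) (hS0 : S ≠ ⊥) :
    ∃ k : ℕ, ∀ x, x ∈ S ↔ (p : ℤ_[p]) ^ k ∣ x := by
  -- `ℤ` is dense in `ℤ_[p]`, so a closed subgroup is stable under multiplication by `ℤ_[p]`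
  let I : Ideal ℤ_[p] :=
    { S with
      smul_mem' := fun c x hx =>
        PadicInt.denseRange_intCast.induction_on c (hS.preimage (continuous_mul_const x))
          fun n => by simpa [zsmul_eq_mul] using S.zsmul_mem hx n }
  obtain ⟨k, hk⟩ := PadicInt.ideal_eq_span_pow_p (s := I) fun hI =>
    hS0 (eq_bot_iff.mpr fun x hx => (Submodule.eq_bot_iff I).mp hI x hx)
  exact ⟨k, fun x => (SetLike.ext_iff.mp hk x).trans Ideal.mem_span_singleton⟩

theorem exists_continuous_mulEquiv_padicInt {G : Type*} [Group G] [TopologicalSpace G]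
    [CompactSpace G] [Nontrivial G] (ψ : Additive G →+ ℤ_[p]) (hψ : Continuous ψ)
    (hinj : Injective ψ) : ∃ e : G ≃* Multiplicative ℤ_[p], Continuous e := by
  have hne : ψ.range ≠ ⊥ := by
    obtain ⟨g, hg⟩ := exists_ne (1 : G)
    refine fun hbot => hg ?_
    have : ψ (Additive.ofMul g) ∈ ψ.range := ⟨_, rfl⟩
    rw [hbot, AddSubgroup.mem_bot] at this
    exact hinj (this.trans (map_zero ψ).symm)
  obtain ⟨k, hk⟩ := PadicInt.exists_mem_iff_pow_dvd_of_isClosed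
    (by simpa using (isCompact_range hψ).isClosed) hne
  have hpk : (p : ℤ_[p]) ^ k ≠ 0 := pow_ne_zero _ (Nat.cast_ne_zero.mpr hp.out.ne_zero)
  choose e he using fun g : G => (hk (ψ (Additive.ofMul g))).mp ⟨_, rfl⟩
  have hmul : ∀ g g' : G, e (g * g') = e g + e g' := fun g g' =>
    mul_left_cancel₀ hpk (by rw [← he, mul_add, ← he, ← he, ofMul_mul, map_add])
  have hbij : Bijective e := by
    refine ⟨fun g g' hgg' => Additive.ofMul.injective (hinj (by rw [he, he, hgg'])),
      fun z => ?_⟩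
    obtain ⟨g, hg⟩ := (hk _).mpr (dvd_mul_right _ z)
    exact ⟨g.toMul, mul_left_cancel₀ hpk (by rw [← he, ofMul_toMul, hg])⟩
  refine ⟨MulEquiv.ofBijective (MonoidHom.mk' (fun g => Multiplicative.ofAdd (e g)) hmul) hbij,
    ?_⟩
  have hemb : IsClosedEmbedding fun c : ℤ_[p] => (p : ℤ_[p]) ^ k * c :=
    (continuous_const_mul _).isClosedEmbedding (mul_right_injective₀ hpk)
  have he_cont : Continuous e :=
    hemb.continuous_iff.mpr (by simpa [comp_def, ← he] using hψ.comp continuous_ofMul)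
  exact continuous_ofAdd.comp he_cont

end PadicInt

section PadicPow

variable {p : ℕ} [hp : Fact p.Prime] {G : Type*} [Group G] [TopologicalSpace G]

theorem IsProP.exists_zpow_mem (hGp : IsProP p G) (U : OpenNormalSubgroup G) :
    ∃ j : ℕ, ∀ (g : G) (a : ℤ), (p : ℤ_[p]) ^ j ∣ a → g ^ a ∈ U := by
  obtain ⟨j, hj⟩ := hGp U.toSubgroup U.isOpen
  refine ⟨j, fun g a ha => ?_⟩
  obtain ⟨b, rfl⟩ : (p : ℤ) ^ j ∣ a := by
    have := (PadicInt.norm_le_pow_iff_mem_span_pow _ _).mpr (Ideal.mem_span_singleton.mpr ha)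
    exact_mod_cast PadicInt.norm_int_le_pow_iff_dvd.mp this
  have hg : g ^ p ^ j ∈ U := hj ▸ U.toSubgroup.pow_index_mem g
  rw [zpow_mul]
  exact zpow_mem (by exact_mod_cast hg) b

/-- The `p`-adic power `h ^ z`; the limit exists when `G` is a profinite pro-`p` group. -/
noncomputable def padicPow (h : G) (z : ℤ_[p]) : G :=
  limUnder atTop fun n => h ^ z.appr n

variable [IsTopologicalGroup G] [CompactSpace G] [TotallyDisconnectedSpace G]

theorem tendsto_pow_appr_padicPow (hGp : IsProP p G) (h : G) (z : ℤ_[p]) :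
    Tendsto (fun n => h ^ z.appr n) atTop (𝓝 (padicPow h z)) := by
  refine tendsto_nhds_limUnder (exists_tendsto_of_forall_openNormalSubgroup fun U => ?_)
  obtain ⟨j, hj⟩ := hGp.exists_zpow_mem U
  refine ⟨j, fun n hn => ?_⟩
  have hsub : (h ^ z.appr j)⁻¹ * h ^ z.appr n = h ^ ((z.appr n : ℤ) - z.appr j) := by
    rw [← zpow_natCast, ← zpow_natCast, ← zpow_neg, ← zpow_add, neg_add_eq_sub]
  rw [hsub]
  refine hj h _ ?_
  convert dvd_sub (PadicInt.pow_dvd_sub_appr j z)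
    ((pow_dvd_pow _ hn).trans (PadicInt.pow_dvd_sub_appr n z)) using 1
  push_cast; ring

theorem tendsto_zpow_padicPow (hGp : IsProP p G) (h : G) {z : ℤ_[p]} {a : ℕ → ℤ}
    (ha : ∀ j : ℕ, ∀ᶠ n in atTop, (p : ℤ_[p]) ^ j ∣ a n - z) :
    Tendsto (fun n => h ^ a n) atTop (𝓝 (padicPow h z)) := by
  have hcorr : Tendsto (fun n => h ^ (a n - z.appr n)) atTop (𝓝 1) := by
    refine ProfiniteGrp.nhds_one_hasBasis_openNormalSubgroup.tendsto_right_iff.mpr fun U _ => ?_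
    obtain ⟨j, hj⟩ := hGp.exists_zpow_mem U
    filter_upwards [ha j, Ici_mem_atTop j] with n hn hjn
    refine hj h _ ?_
    convert dvd_add hn ((pow_dvd_pow _ hjn).trans (PadicInt.pow_dvd_sub_appr n z)) using 1
    push_cast; ring
  have hsplit : ∀ n, h ^ z.appr n * h ^ (a n - z.appr n) = h ^ a n := fun n => by
    rw [← zpow_natCast, ← zpow_add, add_sub_cancel]
  simpa [hsplit] using (tendsto_pow_appr_padicPow hGp h z).mul hcorr

variable [T2Space G]

theorem padicPow_intCast (hGp : IsProP p G) (h : G) (m : ℤ) : padicPow h (m : ℤ_[p]) = h ^ m :=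
  tendsto_nhds_unique (tendsto_zpow_padicPow hGp h (a := fun _ => m) fun _ => by simp)
    tendsto_const_nhds

theorem padicPow_zero (hGp : IsProP p G) (h : G) : padicPow h (0 : ℤ_[p]) = 1 := by
  simpa using padicPow_intCast hGp h 0

theorem padicPow_one (hGp : IsProP p G) (z : ℤ_[p]) : padicPow (1 : G) z = 1 :=
  tendsto_nhds_unique (tendsto_pow_appr_padicPow hGp 1 z) (by simp)

theorem padicPow_add (hGp : IsProP p G) (h : G) (x y : ℤ_[p]) :
    padicPow h (x + y) = padicPow h x * padicPow h y := by
  refine tendsto_nhds_unique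
    (tendsto_zpow_padicPow hGp h (a := fun n => x.appr n + y.appr n) fun j => ?_) ?_
  · filter_upwards [Ici_mem_atTop j] with n hn
    rw [← dvd_neg]
    convert dvd_add ((pow_dvd_pow _ hn).trans (PadicInt.pow_dvd_sub_appr n x))
      ((pow_dvd_pow _ hn).trans (PadicInt.pow_dvd_sub_appr n y)) using 1
    push_cast; ring
  · simpa [zpow_add] using
      (tendsto_pow_appr_padicPow hGp h x).mul (tendsto_pow_appr_padicPow hGp h y)

theorem continuous_padicPow (hGp : IsProP p G) (h : G) :
    Continuous (padicPow h : ℤ_[p] → G) := by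
  refine continuous_iff_continuousAt.mpr fun z => ?_
  have hsmall : Tendsto (fun w => padicPow h (w - z)) (𝓝 z) (𝓝 1) := by
    refine ProfiniteGrp.nhds_one_hasBasis_openNormalSubgroup.tendsto_right_iff.mpr fun U _ => ?_
    obtain ⟨j, hj⟩ := hGp.exists_zpow_mem U
    have hball : Metric.closedBall z ((p : ℝ) ^ (-j : ℤ)) ∈ 𝓝 z :=
      Metric.closedBall_mem_nhds z (zpow_pos (by exact_mod_cast hp.out.pos) _)
    filter_upwards [hball] with w hw
    rw [Metric.mem_closedBall, dist_eq_norm, PadicInt.norm_le_pow_iff_mem_span_pow,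
      Ideal.mem_span_singleton] at hw
    refine (U.toOpenSubgroup.isClosed).mem_of_tendsto (tendsto_pow_appr_padicPow hGp h _) ?_
    filter_upwards [Ici_mem_atTop j] with n hn
    rw [← zpow_natCast]
    refine hj h _ ?_
    convert dvd_sub hw ((pow_dvd_pow _ hn).trans (PadicInt.pow_dvd_sub_appr n (w - z))) using 1
    push_cast; ring
  simpa [ContinuousAt, ← padicPow_add hGp] using hsmall.const_mul (padicPow h z)

theorem padicPow_intCast_mul (hGp : IsProP p G) (h : G) (n : ℤ) (z : ℤ_[p]) :
    padicPow h ((n : ℤ_[p]) * z) = padicPow h z ^ n := by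
  refine congrFun (PadicInt.denseRange_intCast.equalizer
    (g := fun z => padicPow h ((n : ℤ_[p]) * z))
    ((continuous_padicPow hGp h).comp (continuous_const.mul continuous_id))
    ((continuous_padicPow hGp h).zpow n) (funext fun m => ?_)) z
  simp only [comp_apply, Pi.pow_apply, ← Int.cast_mul, padicPow_intCast hGp, ← zpow_mul,
    mul_comm]

theorem padicPow_mul (hGp : IsProP p G) (h : G) (x z : ℤ_[p]) :
    padicPow h (x * z) = padicPow (padicPow h z) x := by
  refine congrFun (PadicInt.denseRange_intCast.equalizer (g := fun x => padicPow h (x * z))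
    ((continuous_padicPow hGp h).comp (continuous_id.mul continuous_const))
    (continuous_padicPow hGp _) (funext fun m => ?_)) x
  simp only [comp_apply, padicPow_intCast_mul hGp, padicPow_intCast hGp]

theorem padicPow_conj (hGp : IsProP p G) (k g : G) (z : ℤ_[p]) :
    padicPow (k * g * k⁻¹) z = k * padicPow g z * k⁻¹ := by
  refine congrFun (PadicInt.denseRange_intCast.equalizer (continuous_padicPow hGp _)
    ((continuous_const.mul (continuous_padicPow hGp g)).mul continuous_const)
    (funext fun m => ?_)) z
  simp only [comp_apply, Pi.mul_apply, padicPow_intCast hGp, conj_zpow]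

theorem range_padicPow (hGp : IsProP p G) (h : G) :
    Set.range (padicPow h : ℤ_[p] → G) = closure (Subgroup.zpowers h : Set G) := by
  refine subset_antisymm ?_
    (closure_minimal ?_ (isCompact_range (continuous_padicPow hGp h)).isClosed)
  · rintro _ ⟨z, rfl⟩
    exact mem_closure_of_tendsto (tendsto_pow_appr_padicPow hGp h z)
      (Eventually.of_forall fun n => Subgroup.pow_mem _ (Subgroup.mem_zpowers h) _)
  · rintro _ ⟨m, rfl⟩
    exact ⟨m, padicPow_intCast hGp h m⟩

theorem padicPow_injective (hGp : IsProP p G) {h : G} (hh : ¬IsOfFinOrder h) :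
    Injective (padicPow h : ℤ_[p] → G) := by
  intro x y hxy
  by_contra hne
  have hz0 : x - y ≠ 0 := sub_ne_zero.mpr hne
  have hz : padicPow h (x - y) = 1 := by
    have := padicPow_add hGp h (x - y) y
    rwa [sub_add_cancel, hxy, right_eq_mul] at this
  -- the kernel of `padicPow h` is an ideal, so it contains the integer `p ^ v(x - y)`
  have hpv : padicPow h ((p ^ (x - y).valuation : ℤ) : ℤ_[p]) = 1 := by
    have hunit : ↑(PadicInt.unitCoeff hz0)⁻¹ * (x - y) = (p : ℤ_[p]) ^ (x - y).valuation :=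
      (Units.inv_mul_eq_iff_eq_mul _).mpr (PadicInt.unitCoeff_spec hz0)
    push_cast
    rw [← hunit, padicPow_mul hGp, hz, padicPow_one hGp]
  rw [padicPow_intCast hGp] at hpv
  exact hh (isOfFinOrder_iff_pow_eq_one.mpr ⟨_, pow_pos hp.out.pos _, by exact_mod_cast hpv⟩)

end PadicPow
section Structure

variable {p : ℕ} [Fact p.Prime] {G : Type*} [Group G] [TopologicalSpace G]
  [IsTopologicalGroup G] [CompactSpace G] [TotallyDisconnectedSpace G] [T2Space G]

theorem conj_eq_self_of_mem_range_padicPow (hGp : IsProP p G) {h : G}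
    (hinj : Injective (padicPow h : ℤ_[p] → G)) {a g w : G}
    (ha : a ∈ Set.range (padicPow h : ℤ_[p] → G)) (ha1 : a ≠ 1) (hga : Commute g a)
    (hw : w ∈ Set.range (padicPow h : ℤ_[p] → G))
    (hgw : g * w * g⁻¹ ∈ Set.range (padicPow h : ℤ_[p] → G)) : g * w * g⁻¹ = w := by
  obtain ⟨α, rfl⟩ := ha
  obtain ⟨x, rfl⟩ := hw
  obtain ⟨y, hy⟩ := hgw
  have hα : α ≠ 0 := by rintro rfl; exact ha1 (padicPow_zero hGp h)
  have hconj : g * padicPow h α * g⁻¹ = padicPow h α := by rw [hga.eq, mul_inv_cancel_right]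
  -- `w ^ α = a ^ x`, and conjugation by `g` commutes with `p`-adic powers and fixes `a`
  have key : padicPow h (α * y) = padicPow h (α * x) := calc
    padicPow h (α * y) = g * padicPow h (α * x) * g⁻¹ := by
      rw [padicPow_mul hGp, hy, padicPow_conj hGp, padicPow_mul hGp]
    _ = padicPow h (α * x) := by
      rw [mul_comm, padicPow_mul hGp, ← padicPow_conj hGp, hconj]
  rw [← hy, mul_left_cancel₀ hα (hinj key)]

theorem normalCore_topologicalClosure_zpowers_le_center (hGp : IsProP p G)
    (htf : ∀ g : G, g ≠ 1 → ¬IsOfFinOrder g) {h : G} (hh : h ≠ 1)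
    (hK : IsOpen (closure (Subgroup.zpowers h : Set G))) :
    (Subgroup.zpowers h).topologicalClosure.normalCore ≤ Subgroup.center G := by
  set K := (Subgroup.zpowers h).topologicalClosure
  have hN : ∀ x ∈ K.normalCore, x ∈ Set.range (padicPow h : ℤ_[p] → G) := fun x hx => by
    rw [range_padicPow hGp h]; exact K.normalCore_le hx
  have : K.FiniteIndex := Subgroup.finiteIndex_of_isOpen hK
  have : K.normalCore.FiniteIndex := K.finiteIndex_normalCore
  intro w hw
  refine Subgroup.mem_center_iff.mpr fun g => ?_
  rcases eq_or_ne g 1 with rfl | hg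
  · simp
  have hgm := K.normalCore.pow_index_mem g
  have hgm1 : g ^ K.normalCore.index ≠ 1 := fun h1 => htf g hg (isOfFinOrder_iff_pow_eq_one.mpr
    ⟨_, Nat.pos_of_ne_zero Subgroup.FiniteIndex.index_ne_zero, h1⟩)
  have := conj_eq_self_of_mem_range_padicPow hGp (padicPow_injective hGp (htf h hh))
    (hN _ hgm) hgm1 (Commute.self_pow g _) (hN w hw)
    (hN _ (K.normalCore_normal.conj_mem w hw g))
  exact mul_inv_eq_iff_eq_mul.mp this

theorem exists_continuous_injective_addMonoidHom_padicInt (hGp : IsProP p G)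
    (htf : ∀ g : G, g ≠ 1 → ¬IsOfFinOrder g) {h : G} (hh : h ≠ 1)
    (hK : IsOpen (closure (Subgroup.zpowers h : Set G))) :
    ∃ ψ : Additive G →+ ℤ_[p], Continuous ψ ∧ Injective ψ := by
  set K := (Subgroup.zpowers h).topologicalClosure
  have hNZ : K.normalCore ≤ Subgroup.center G :=
    normalCore_topologicalClosure_zpowers_le_center hGp htf hh hK
  have : K.FiniteIndex := Subgroup.finiteIndex_of_isOpen hK
  have : K.normalCore.FiniteIndex := K.finiteIndex_normalCore
  have : (Subgroup.center G).FiniteIndex := Subgroup.finiteIndex_of_le hNZ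
  have hcomm := commute_of_torsionFree_of_finiteIndex_center htf
  -- as `G` is abelian, `g ↦ g ^ [G : K.normalCore]` is a homomorphism into `range (padicPow h)`
  have hφ : ∀ g : G, ∃ z : ℤ_[p], padicPow h z = g ^ K.normalCore.index := fun g => by
    rw [← Set.mem_range, range_padicPow hGp h]
    exact K.normalCore_le (K.normalCore.pow_index_mem g)
  choose ψ hψ using hφ
  have hinj := padicPow_injective hGp (p := p) (htf h hh)
  have hadd : ∀ g k : G, ψ (g * k) = ψ g + ψ k := fun g k =>
    hinj (by rw [padicPow_add hGp, hψ, hψ, hψ, (hcomm g k).mul_pow])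
  refine ⟨AddMonoidHom.mk' (fun g => ψ g.toMul) fun g k => hadd _ _, ?_, ?_⟩
  · refine ((continuous_padicPow hGp h).isClosedEmbedding hinj).continuous_iff.mpr ?_
    simpa [comp_def, hψ] using (continuous_pow _).comp (continuous_toMul (X := G))
  · refine (injective_iff_map_eq_zero _).mpr fun g hg => by_contra fun hg1 => ?_
    have hg' : g.toMul ^ K.normalCore.index = 1 := by
      rw [← hψ, show ψ g.toMul = 0 from hg, padicPow_zero hGp]
    exact htf g.toMul hg1 (isOfFinOrder_iff_pow_eq_one.mpr
      ⟨_, Nat.pos_of_ne_zero Subgroup.FiniteIndex.index_ne_zero, hg'⟩)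

end Structure

/-- A torsion-free pro-`p` group containing an open procyclic subgroup is
itself procyclic, namely isomorphic (as a topological group) to `ℤ_p` or trivial. -/
theorem stmt_8 (p : ℕ) [Fact p.Prime] (G : Type*) [Group G] [TopologicalSpace G]
    [IsTopologicalGroup G] [CompactSpace G] [TotallyDisconnectedSpace G] [T2Space G]
    (hGp : IsProP p G) (htf : ∀ g : G, g ≠ 1 → ¬IsOfFinOrder g)
    (H : Subgroup G) (hHopen : IsOpen (H : Set G)) (hH : IsProcyclic H) :
    IsProcyclic G ∧
      (Subsingleton G ∨ ∃ e : G ≃* Multiplicative ℤ_[p], Continuous e) := by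
  obtain ⟨h, hK⟩ := exists_closure_zpowers_eq_of_isProcyclic (H.isClosed_of_isOpen hHopen) hH
  rw [← hK] at hHopen
  rcases eq_or_ne h 1 with rfl | hh
  · have : Subsingleton G := subsingleton_of_isOpen_singleton_one htf (by simpa using hHopen)
    exact ⟨isProcyclic_of_subsingleton, Or.inl this⟩
  · have : Nontrivial G := ⟨⟨h, 1, hh⟩⟩
    obtain ⟨ψ, hψ, hinj⟩ :=
      exists_continuous_injective_addMonoidHom_padicInt hGp htf hh hHopen
    obtain ⟨e, he⟩ := exists_continuous_mulEquiv_padicInt ψ hψ hinj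
    have he_symm : Continuous e.symm :=
      (show Continuous e.toEquiv from he).continuous_symm_of_equiv_compact_to_t2
    exact ⟨isProcyclic_multiplicative_padicInt.of_surjective e.symm.toMonoidHom he_symm
      e.symm.surjective, Or.inr ⟨e, he⟩⟩
end
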